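/- Suppose strata sizes N_h > 0 with N = Σ N_h, intended sample size m > 0, response probabilities p_h ∈ (0,1], and per-stratum 'yes' probabilities q_h ∈ [0,1]. Define σ²_PS = (1/(N m)) Σ_h N_h q_h (1−q_h) (r/p_h) with r = Σ_h (N_h/N) p_h, and σ²_ERR = (1/(N m)) Σ_h N_h q_h (1−q_h) (p_h/p_h) = (1/(N m)) Σ_h N_h q_h (1−q_h). If q_h = q is constant across strata, then σ²_ERR ≤ σ²_PS. -/

import Mathlib

/-!
With a constant `q`, both variances carry the common factor `q (1 - q) / (N m)`, and what remains
is `N ≤ r · ∑ N_h / p_h`. Since `r = ∑ N_h p_h / N`, this is the Cauchy–Schwarz inequality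
`(∑ N_h)² ≤ (∑ N_h p_h) (∑ N_h / p_h)`, i.e. the weighted arithmetic mean of the `p_h`
dominates their weighted harmonic mean.
-/

open Finset

section WeightedMeans

variable {ι : Type*} (s : Finset ι) {w p : ι → ℝ}

theorem sq_sum_le_sum_mul_mul_sum_div (hw : ∀ i ∈ s, 0 ≤ w i) (hp : ∀ i ∈ s, 0 < p i) :
    (∑ i ∈ s, w i) ^ 2 ≤ (∑ i ∈ s, w i * p i) * ∑ i ∈ s, w i / p i :=
  sum_sq_le_sum_mul_sum_of_sq_le_mul s
    (fun i hi => mul_nonneg (hw i hi) (hp i hi).le)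
    (fun i hi => div_nonneg (hw i hi) (hp i hi).le)
    (fun i hi => by field_simp [(hp i hi).ne']; rfl)

theorem sum_le_weightedMean_mul_sum_div (hw : ∀ i ∈ s, 0 ≤ w i) (hp : ∀ i ∈ s, 0 < p i)
    (hsum : 0 < ∑ i ∈ s, w i) :
    ∑ i ∈ s, w i ≤ (∑ i ∈ s, w i / (∑ j ∈ s, w j) * p i) * ∑ i ∈ s, w i / p i := by
  have hmean : ∑ i ∈ s, w i / (∑ j ∈ s, w j) * p i = (∑ i ∈ s, w i * p i) / ∑ j ∈ s, w j := by
    rw [sum_div]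
    exact sum_congr rfl fun i _ => div_mul_eq_mul_div _ _ _
  rw [hmean, div_mul_eq_mul_div, le_div_iff₀ hsum, ← sq]
  exact sq_sum_le_sum_mul_mul_sum_div s hw hp

end WeightedMeans

theorem ERR_le_PS_constant_q_general
    (H : ℕ) (hH : 1 ≤ H)
    (N : Fin H → ℝ) (hN : ∀ h, 0 < N h)
    (Ntot : ℝ) (hNtot : Ntot = ∑ h, N h)
    (m : ℝ) (hm : 0 < m)
    (p : Fin H → ℝ) (hp0 : ∀ h, 0 < p h)
    (q : Fin H → ℝ) (hq0 : ∀ h, 0 ≤ q h) (hq1 : ∀ h, q h ≤ 1)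
    (r : ℝ) (hr : r = ∑ h, (N h / Ntot) * p h)
    (σPS σERR : ℝ)
    (hPS : σPS = (1 / (Ntot * m)) * ∑ h, N h * (q h * (1 - q h)) * (r / p h))
    (hERR : σERR = (1 / (Ntot * m)) * ∑ h, N h * (q h * (1 - q h)))
    (qc : ℝ) (hqc : ∀ h, q h = qc) :
    σERR ≤ σPS := by
  have h₀ : Fin H := ⟨0, hH⟩
  have hNtot_pos : 0 < Ntot := hNtot ▸ sum_pos (fun h _ => hN h) ⟨h₀, mem_univ h₀⟩
  have hc : 0 ≤ qc * (1 - qc) := hqc h₀ ▸ mul_nonneg (hq0 h₀) (sub_nonneg.2 (hq1 h₀))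
  have hmean : Ntot ≤ r * ∑ h, N h / p h := by
    subst hNtot hr
    exact sum_le_weightedMean_mul_sum_div univ (fun h _ => (hN h).le) (fun h _ => hp0 h) hNtot_pos
  have hPS' : σPS = 1 / (Ntot * m) * (qc * (1 - qc) * (r * ∑ h, N h / p h)) := by
    rw [hPS]
    congr 1
    rw [mul_sum, mul_sum]
    exact sum_congr rfl fun h _ => by rw [hqc]; ring
  have hERR' : σERR = 1 / (Ntot * m) * (qc * (1 - qc) * Ntot) := by
    rw [hERR, hNtot]
    congr 1
    rw [mul_sum]
    exact sum_congr rfl fun h _ => by rw [hqc]; ring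
  rw [hPS', hERR']
  gcongr

theorem ERR_le_PS_constant_q
    (H : ℕ) (hH : 1 ≤ H)
    (N : Fin H → ℝ) (hN : ∀ h, 0 < N h)
    (Ntot : ℝ) (hNtot : Ntot = ∑ h, N h)
    (m : ℝ) (hm : 0 < m)
    (p : Fin H → ℝ) (hp0 : ∀ h, 0 < p h) (hp1 : ∀ h, p h ≤ 1)
    (q : Fin H → ℝ) (hq0 : ∀ h, 0 ≤ q h) (hq1 : ∀ h, q h ≤ 1)
    (r : ℝ) (hr : r = ∑ h, (N h / Ntot) * p h)
    (σPS σERR : ℝ)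
    (hPS : σPS = (1 / (Ntot * m)) * ∑ h, N h * (q h * (1 - q h)) * (r / p h))
    (hERR : σERR = (1 / (Ntot * m)) * ∑ h, N h * (q h * (1 - q h)))
    (qc : ℝ) (hqc : ∀ h, q h = qc) :
    σERR ≤ σPS :=
  ERR_le_PS_constant_q_general H hH N hN Ntot hNtot m hm p hp0 q hq0 hq1 r hr σPS σERR hPS hERR qc
    hqc
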